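/- Let X, Y, E be random variables on a common probability space (Ω, μ) taking values in nonempty finite types 𝒳, 𝒴, ℰ, and suppose that for all values x, e, y with μ(X=x, E=e) > 0 one has P(Y=y | X=x, E=e) = P(Y=y | X=x). Let f* : 𝒳 → 𝒴 satisfy: for every x with μ(X=x) > 0 and every y ∈ 𝒴, P(Y = f*(x) | X=x) ≥ P(Y = y | X=x). Then for every e with μ(E=e) > 0 and every function h : 𝒳 → 𝒴, P(f*(X) ≠ Y | E=e) ≤ P(h(X) ≠ Y | E=e); consequently f* minimizes the worst-case risk, i.e. the maximum over e of P(·(X) ≠ Y | E=e) at f* is less than or equal to its value at any h. -/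

import Mathlib

open MeasureTheory ProbabilityTheory

/-- Shannon entropy of a finite-valued random variable `X` under measure `μ`. -/
noncomputable def finEntropy {Ω : Type*} [MeasurableSpace Ω] {S : Type*} [Fintype S]
    (μ : Measure Ω) (X : Ω → S) : ℝ :=
  ∑ s : S, Real.negMulLog (μ (X ⁻¹' {s})).toReal

/-- Conditional entropy `H(X | Y) = ∑ y, μ(Y = y) • H(X ; μ(·|Y=y))`. -/
noncomputable def finCondEntropy {Ω : Type*} [MeasurableSpace Ω] {S T : Type*}
    [Fintype S] [Fintype T] (μ : Measure Ω) (X : Ω → S) (Y : Ω → T) : ℝ :=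
  ∑ t : T, (μ (Y ⁻¹' {t})).toReal * finEntropy (μ[|Y ⁻¹' {t}]) X

/-- Mutual information `I(X ; Y) = H(X) + H(Y) - H(⟨X, Y⟩)`. -/
noncomputable def finMutualInfo {Ω : Type*} [MeasurableSpace Ω] {S T : Type*}
    [Fintype S] [Fintype T] (μ : Measure Ω) (X : Ω → S) (Y : Ω → T) : ℝ :=
  finEntropy μ X + finEntropy μ Y - finEntropy μ (fun ω => (X ω, Y ω))

/-- Conditional mutual information `I(X ; Y | Z) = ∑ z, μ(Z = z) • I(X ; Y ; μ(·|Z=z))`. -/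
noncomputable def finCondMutualInfo {Ω : Type*} [MeasurableSpace Ω] {S T U : Type*}
    [Fintype S] [Fintype T] [Fintype U]
    (μ : Measure Ω) (X : Ω → S) (Y : Ω → T) (Z : Ω → U) : ℝ :=
  ∑ u : U, (μ (Z ⁻¹' {u})).toReal * finMutualInfo (μ[|Z ⁻¹' {u}]) X Y

/-!
In environment `e`, the probability that `h X = Y` splits over the fibres `X = x` as
`∑ x, μ(X = x, E = e) * P(Y = h x | X = x, E = e)`. Invariance replaces each conditional by
`P(Y = h x | X = x)`, which `fstar` maximizes fibrewise; so `fstar` has the smallest risk in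
every environment, hence also the smallest supremum of risks.
-/

namespace ProbabilityTheory

variable {Ω α β : Type*} [MeasurableSpace Ω] [MeasurableSpace α] [MeasurableSpace β]
  {μ : Measure Ω} {X : Ω → α} {Y : Ω → β} {s : Set Ω}

lemma measure_inter_le_measure_inter_of_cond_le [IsFiniteMeasure μ] {t B C : Set Ω}
    (ht : MeasurableSet t) (hle : μ[B|t] ≤ μ[C|t]) : μ (t ∩ B) ≤ μ (t ∩ C) := by
  rw [← cond_mul_eq_inter ht, ← cond_mul_eq_inter ht]
  gcongr

lemma cond_compl_le_cond_compl [IsFiniteMeasure μ] {A B : Set Ω} (hs : MeasurableSet s)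
    (hA : MeasurableSet A) (hB : MeasurableSet B) (hle : μ (s ∩ B) ≤ μ (s ∩ A)) :
    μ[Aᶜ|s] ≤ μ[Bᶜ|s] := by
  rw [measure_compl hA (measure_ne_top _ _), measure_compl hB (measure_ne_top _ _)]
  refine tsub_le_tsub_left ?_ _
  rw [cond_apply hs, cond_apply hs]
  gcongr

variable [MeasurableSingletonClass α] [MeasurableSingletonClass β]

lemma measure_inter_setOf_apply_eq [Fintype α] (hX : Measurable X) (hY : Measurable Y)
    (hs : MeasurableSet s) (h : α → β) :
    μ (s ∩ {ω | h (X ω) = Y ω}) = ∑ x, μ (X ⁻¹' {x} ∩ s ∩ Y ⁻¹' {h x}) := by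
  rw [← measure_biUnion_finset]
  · congr 1
    ext ω
    simp [and_comm, eq_comm]
  · intro x _ x' _ hxx'
    exact Set.disjoint_left.mpr fun ω hx hx' => hxx' (hx.1.1.symm.trans hx'.1.1)
  · intro x _
    exact ((hX (measurableSet_singleton x)).inter hs).inter (hY (measurableSet_singleton _))

lemma measure_inter_setOf_apply_eq_le_of_bayes [IsFiniteMeasure μ] [Fintype α] (hX : Measurable X)
    (hY : Measurable Y) (hs : MeasurableSet s)
    (hinv : ∀ x y, 0 < μ (X ⁻¹' {x} ∩ s) →
      μ[Y ⁻¹' {y}|X ⁻¹' {x} ∩ s] = μ[Y ⁻¹' {y}|X ⁻¹' {x}])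
    {f : α → β} (hbayes : ∀ x, 0 < μ (X ⁻¹' {x}) → ∀ y,
      μ[Y ⁻¹' {y}|X ⁻¹' {x}] ≤ μ[Y ⁻¹' {f x}|X ⁻¹' {x}]) (h : α → β) :
    μ (s ∩ {ω | h (X ω) = Y ω}) ≤ μ (s ∩ {ω | f (X ω) = Y ω}) := by
  rw [measure_inter_setOf_apply_eq hX hY hs, measure_inter_setOf_apply_eq hX hY hs]
  refine Finset.sum_le_sum fun x _ => measure_inter_le_measure_inter_of_cond_le
    ((hX (measurableSet_singleton x)).inter hs) ?_
  rcases eq_zero_or_pos (μ (X ⁻¹' {x} ∩ s)) with hnull | hpos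
  · simp [cond_eq_zero_of_meas_eq_zero hnull]
  · rw [hinv x _ hpos, hinv x _ hpos]
    exact hbayes x (hpos.trans_le (measure_mono Set.inter_subset_left)) (h x)

end ProbabilityTheory

theorem stmt_5_general {Ω : Type*} [MeasurableSpace Ω] (μ : Measure Ω) [IsProbabilityMeasure μ]
    {𝒳 𝒴 ℰ : Type*}
    [Fintype 𝒳] [MeasurableSpace 𝒳] [DiscreteMeasurableSpace 𝒳]
    [Fintype 𝒴] [MeasurableSpace 𝒴] [DiscreteMeasurableSpace 𝒴]
    [MeasurableSpace ℰ] [DiscreteMeasurableSpace ℰ]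
    (X : Ω → 𝒳) (Y : Ω → 𝒴) (E : Ω → ℰ)
    (hX : Measurable X) (hY : Measurable Y) (hE : Measurable E)
    (hinv : ∀ (x : 𝒳) (e : ℰ) (y : 𝒴), 0 < μ (X ⁻¹' {x} ∩ E ⁻¹' {e}) →
      μ[|X ⁻¹' {x} ∩ E ⁻¹' {e}] (Y ⁻¹' {y}) = μ[|X ⁻¹' {x}] (Y ⁻¹' {y}))
    (fstar : 𝒳 → 𝒴)
    (hbayes : ∀ x : 𝒳, 0 < μ (X ⁻¹' {x}) → ∀ y : 𝒴,
      μ[|X ⁻¹' {x}] (Y ⁻¹' {y}) ≤ μ[|X ⁻¹' {x}] (Y ⁻¹' {fstar x})) :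
    (∀ e : ℰ, 0 < μ (E ⁻¹' {e}) → ∀ h : 𝒳 → 𝒴,
      μ[|E ⁻¹' {e}] {ω | fstar (X ω) ≠ Y ω} ≤ μ[|E ⁻¹' {e}] {ω | h (X ω) ≠ Y ω}) ∧
    (∀ h : 𝒳 → 𝒴,
      (⨆ e : ℰ, μ[|E ⁻¹' {e}] {ω | fstar (X ω) ≠ Y ω}) ≤
        ⨆ e : ℰ, μ[|E ⁻¹' {e}] {ω | h (X ω) ≠ Y ω}) := by
  have hcorrect : ∀ g : 𝒳 → 𝒴, MeasurableSet {ω | g (X ω) = Y ω} := fun g =>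
    measurableSet_eq_fun ((Measurable.of_discrete (f := g)).comp hX) hY
  have hrisk : ∀ (e : ℰ) (h : 𝒳 → 𝒴),
      μ[{ω | fstar (X ω) ≠ Y ω}|E ⁻¹' {e}] ≤ μ[{ω | h (X ω) ≠ Y ω}|E ⁻¹' {e}] := by
    intro e h
    have hs : MeasurableSet (E ⁻¹' {e}) := hE (measurableSet_singleton e)
    exact cond_compl_le_cond_compl hs (hcorrect fstar) (hcorrect h)
      (measure_inter_setOf_apply_eq_le_of_bayes hX hY hs (fun x y => hinv x e y) hbayes h)
  exact ⟨fun e _ h => hrisk e h, fun h => iSup_mono fun e => hrisk e h⟩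

/-- Proposition C.1: if P(Y | X, E) = P(Y | X) and fstar is the conditional Bayes
predictor, then fstar minimizes the risk in every environment, and hence the
worst-case risk over environments. -/
theorem stmt_5 {Ω : Type*} [MeasurableSpace Ω] (μ : Measure Ω) [IsProbabilityMeasure μ]
    {𝒳 𝒴 ℰ : Type*}
    [Fintype 𝒳] [Nonempty 𝒳] [MeasurableSpace 𝒳] [DiscreteMeasurableSpace 𝒳]
    [Fintype 𝒴] [Nonempty 𝒴] [MeasurableSpace 𝒴] [DiscreteMeasurableSpace 𝒴]
    [Fintype ℰ] [Nonempty ℰ] [MeasurableSpace ℰ] [DiscreteMeasurableSpace ℰ]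
    (X : Ω → 𝒳) (Y : Ω → 𝒴) (E : Ω → ℰ)
    (hX : Measurable X) (hY : Measurable Y) (hE : Measurable E)
    (hinv : ∀ (x : 𝒳) (e : ℰ) (y : 𝒴), 0 < μ (X ⁻¹' {x} ∩ E ⁻¹' {e}) →
      μ[|X ⁻¹' {x} ∩ E ⁻¹' {e}] (Y ⁻¹' {y}) = μ[|X ⁻¹' {x}] (Y ⁻¹' {y}))
    (fstar : 𝒳 → 𝒴)
    (hbayes : ∀ x : 𝒳, 0 < μ (X ⁻¹' {x}) → ∀ y : 𝒴,
      μ[|X ⁻¹' {x}] (Y ⁻¹' {y}) ≤ μ[|X ⁻¹' {x}] (Y ⁻¹' {fstar x})) :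
    (∀ e : ℰ, 0 < μ (E ⁻¹' {e}) → ∀ h : 𝒳 → 𝒴,
      μ[|E ⁻¹' {e}] {ω | fstar (X ω) ≠ Y ω} ≤ μ[|E ⁻¹' {e}] {ω | h (X ω) ≠ Y ω}) ∧
    (∀ h : 𝒳 → 𝒴,
      (⨆ e : ℰ, μ[|E ⁻¹' {e}] {ω | fstar (X ω) ≠ Y ω}) ≤
        ⨆ e : ℰ, μ[|E ⁻¹' {e}] {ω | h (X ω) ≠ Y ω}) :=
  stmt_5_general μ X Y E hX hY hE hinv fstar hbayes
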